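/- arXiv:2111.00496 — 3 statements merged into one kernel-verified Lean document; each statement's English description precedes it below -/
import Mathlib

section
/- The Fourier transform (with convention F[f](κ) = (1/√(2π)) ∫ f(x) e^{jκx} dx) of f(x) = 1/(d² + x²)^{3/2} equals (1/d)·√(2/π)·|κ|·K₁(d|κ|) for κ ≠ 0 and d > 0, where K₁ is the modified Bessel function of the second kind of order 1. -/
open MeasureTheory

/-- The modified Bessel function of the second kind `K_ν(x)`, via its integral
representation `K_ν(x) = ∫_0^∞ e^{-x cosh t} cosh(ν t) dt` (valid for `x > 0`). -/
noncomputable def besselK (ν x : ℝ) : ℝ :=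
  ∫ t in Set.Ioi (0 : ℝ), Real.exp (-(x * Real.cosh t)) * Real.cosh (ν * t)

open Set Real Complex

namespace FourierBesselAux

/-- `e^x ≥ x²/2` for `x ≥ 0`. -/
lemma sq_div_two_le_exp {x : ℝ} (hx : 0 ≤ x) : x ^ 2 / 2 ≤ Real.exp x := by
  have h := Real.add_one_le_exp (x / 3)
  have h3 : Real.exp x = Real.exp (x / 3) ^ 3 := by
    rw [← Real.exp_nat_mul]; norm_num; ring_nf
  have hpos : 0 ≤ x / 3 + 1 := by positivity
  have : (x / 3 + 1) ^ 3 ≤ Real.exp (x / 3) ^ 3 := by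
    exact pow_le_pow_left₀ hpos h 3
  rw [h3]
  nlinarith [sq_nonneg (x - 3), sq_nonneg x, hx]

lemma cosh_lower (t : ℝ) : t ^ 2 / 4 ≤ Real.cosh t := by
  have h1 : Real.exp |t| / 2 ≤ Real.cosh t := by
    rw [← Real.cosh_abs, Real.cosh_eq]
    have := Real.exp_pos (-|t|)
    linarith
  have h2 : |t| ^ 2 / 2 ≤ Real.exp |t| := sq_div_two_le_exp (abs_nonneg t)
  have : |t| ^ 2 = t ^ 2 := sq_abs t
  linarith

lemma exp_cosh_bound {a : ℝ} (ha : 0 < a) (t : ℝ) :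
    Real.exp (-(a * Real.cosh t)) * Real.cosh t ≤ (2 / a) * Real.exp (-(a / 8) * t ^ 2) := by
  have hc1 : (1 : ℝ) ≤ Real.cosh t := Real.one_le_cosh t
  have hc0 : 0 < Real.cosh t := lt_of_lt_of_le one_pos hc1
  have hb : Real.cosh t ≤ (2 / a) * Real.exp (a / 2 * Real.cosh t) := by
    have := Real.add_one_le_exp (a / 2 * Real.cosh t)
    have h2 : a / 2 * Real.cosh t ≤ Real.exp (a / 2 * Real.cosh t) := by linarith
    calc Real.cosh t = (2 / a) * (a / 2 * Real.cosh t) := by field_simp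
      _ ≤ (2 / a) * Real.exp (a / 2 * Real.cosh t) := by
          apply mul_le_mul_of_nonneg_left h2 (by positivity)
  calc Real.exp (-(a * Real.cosh t)) * Real.cosh t
      ≤ Real.exp (-(a * Real.cosh t)) * ((2 / a) * Real.exp (a / 2 * Real.cosh t)) := by
        apply mul_le_mul_of_nonneg_left hb (Real.exp_pos _).le
    _ = (2 / a) * Real.exp (-(a / 2) * Real.cosh t) := by
        rw [show Real.exp (-(a * Real.cosh t)) * (2 / a * Real.exp (a / 2 * Real.cosh t))
            = 2 / a * (Real.exp (-(a * Real.cosh t)) * Real.exp (a / 2 * Real.cosh t)) from by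
          ring, ← Real.exp_add]
        ring_nf
    _ ≤ (2 / a) * Real.exp (-(a / 8) * t ^ 2) := by
        apply mul_le_mul_of_nonneg_left _ (by positivity)
        apply Real.exp_le_exp.mpr
        nlinarith [cosh_lower t, ha.le]

lemma integrable_exp_cosh_cosh {a : ℝ} (ha : 0 < a) :
    Integrable (fun t : ℝ ↦ Real.exp (-(a * Real.cosh t)) * Real.cosh t) := by
  apply Integrable.mono
    ((integrable_exp_neg_mul_sq (by positivity : (0:ℝ) < a / 8)).const_mul (2 / a))
  · exact (Continuous.mul (by continuity) Real.continuous_cosh).aestronglyMeasurable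
  · filter_upwards with t
    have h1 : 0 ≤ Real.exp (-(a * Real.cosh t)) * Real.cosh t := by
      have := Real.one_le_cosh t; positivity
    rw [Real.norm_eq_abs, Real.norm_eq_abs, _root_.abs_of_nonneg h1, _root_.abs_of_nonneg (by positivity)]
    exact exp_cosh_bound ha t

lemma integrable_exp_cosh_sinh {a : ℝ} (ha : 0 < a) :
    Integrable (fun t : ℝ ↦ Real.exp (-(a * Real.cosh t)) * Real.sinh t) := by
  apply Integrable.mono (integrable_exp_cosh_cosh ha)
  · exact (Continuous.mul (by continuity) Real.continuous_sinh).aestronglyMeasurable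
  · filter_upwards with t
    have hc1 := Real.one_le_cosh t
    have hs : |Real.sinh t| ≤ Real.cosh t := by
      rw [abs_le]
      constructor
      · have := Real.sinh_lt_cosh (-t)
        rw [Real.sinh_neg, Real.cosh_neg] at this; linarith
      · exact (Real.sinh_lt_cosh t).le
    rw [Real.norm_eq_abs, Real.norm_eq_abs, abs_mul, _root_.abs_of_nonneg (Real.exp_pos _).le,
      _root_.abs_of_nonneg (by positivity : (0:ℝ) ≤ Real.exp (-(a * Real.cosh t)) * Real.cosh t)]
    exact mul_le_mul_of_nonneg_left hs (Real.exp_pos _).le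

lemma integral_exp_cosh_sinh {a : ℝ} :
    ∫ t : ℝ, Real.exp (-(a * Real.cosh t)) * Real.sinh t = 0 := by
  have h := integral_neg_eq_self (fun t : ℝ ↦ Real.exp (-(a * Real.cosh t)) * Real.sinh t) volume
  simp only [Real.cosh_neg, Real.sinh_neg, mul_neg] at h
  rw [integral_neg] at h
  linarith

lemma integral_exp_cosh_cosh {a : ℝ} :
    ∫ t : ℝ, Real.exp (-(a * Real.cosh t)) * Real.cosh t = 2 * besselK 1 a := by
  have h := integral_comp_abs (f := fun u : ℝ ↦ Real.exp (-(a * Real.cosh u)) * Real.cosh u)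
  simp only [Real.cosh_abs] at h
  rw [h]
  unfold besselK
  norm_num

/-- substitution `s = (|κ|/(2d)) e^t`. -/
lemma J_eq_aux {d κ : ℝ} (hd : 0 < d) (hκ : κ ≠ 0) :
    ∫ s in Ioi (0:ℝ), Real.exp (-(s * d ^ 2 + κ ^ 2 / (4 * s)))
      = (|κ| / (2 * d)) * ∫ t : ℝ, Real.exp t * Real.exp (-(d * |κ| * Real.cosh t)) := by
  set b := |κ| / (2 * d) with hb
  have hbpos : 0 < b := by
    have : 0 < |κ| := abs_pos.mpr hκ
    positivity
  have himg : (fun t : ℝ ↦ b * Real.exp t) '' univ = Ioi (0:ℝ) := by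
    ext y
    simp only [image_univ, mem_range, mem_Ioi]
    constructor
    · rintro ⟨t, rfl⟩; positivity
    · intro hy
      exact ⟨Real.log (y / b), by
        rw [Real.exp_log (by positivity)]
        field_simp⟩
  have hderiv : ∀ t ∈ (univ : Set ℝ),
      HasDerivWithinAt (fun t : ℝ ↦ b * Real.exp t) (b * Real.exp t) univ t := by
    intro t _
    exact ((Real.hasDerivAt_exp t).const_mul b).hasDerivWithinAt
  have hinj : InjOn (fun t : ℝ ↦ b * Real.exp t) univ := by
    intro x _ y _ hxy
    simpa [hbpos.ne', Real.exp_eq_exp] using hxy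
  rw [← himg, integral_image_eq_integral_abs_deriv_smul MeasurableSet.univ hderiv hinj]
  rw [Measure.restrict_univ]
  rw [← integral_const_mul]
  congr 1
  ext t
  have he : (0:ℝ) < Real.exp t := Real.exp_pos t
  rw [abs_of_pos (by positivity), smul_eq_mul]
  have harg : b * Real.exp t * d ^ 2 + κ ^ 2 / (4 * (b * Real.exp t))
      = d * |κ| * Real.cosh t := by
    rw [Real.cosh_eq, hb]
    have h1 : κ ^ 2 = |κ| ^ 2 := (_root_.sq_abs κ).symm
    rw [h1, Real.exp_neg]
    have : 0 < |κ| := abs_pos.mpr hκ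
    field_simp
    ring
  rw [harg]
  ring

lemma J_eq {d κ : ℝ} (hd : 0 < d) (hκ : κ ≠ 0) :
    ∫ s in Ioi (0:ℝ), Real.exp (-(s * d ^ 2 + κ ^ 2 / (4 * s)))
      = (|κ| / d) * besselK 1 (d * |κ|) := by
  rw [J_eq_aux hd hκ]
  have ha : 0 < d * |κ| := by
    have : 0 < |κ| := abs_pos.mpr hκ
    positivity
  have hsplit : ∀ t : ℝ, Real.exp t * Real.exp (-(d * |κ| * Real.cosh t))
      = Real.exp (-(d * |κ| * Real.cosh t)) * Real.cosh t
        + Real.exp (-(d * |κ| * Real.cosh t)) * Real.sinh t := by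
    intro t
    rw [← mul_add, Real.cosh_add_sinh]
    ring
  simp_rw [hsplit]
  rw [integral_add (integrable_exp_cosh_cosh ha) (integrable_exp_cosh_sinh ha),
    integral_exp_cosh_cosh, integral_exp_cosh_sinh]
  have : 0 < |κ| := abs_pos.mpr hκ
  field_simp
  ring

/-- The auxiliary integrand of the Fubini argument. -/
noncomputable def F (d κ : ℝ) (s x : ℝ) : ℂ :=
  (Real.sqrt s : ℂ) * Complex.exp (-(s:ℂ) * x^2 + (Complex.I * κ) * x + -((s:ℂ) * d^2))

lemma normF {d κ : ℝ} {s : ℝ} (x : ℝ) :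
    ‖F d κ s x‖ = Real.sqrt s * Real.exp (-(s * d^2)) * Real.exp (-s * x^2) := by
  unfold F
  rw [norm_mul, Complex.norm_exp, Complex.norm_real,
    Real.norm_eq_abs, _root_.abs_of_nonneg (Real.sqrt_nonneg s)]
  rw [show (-(s:ℂ) * x^2 + (Complex.I * κ) * x + -((s:ℂ) * d^2))
      = ((-(s * d^2) + -s * x^2 : ℝ) : ℂ) + Complex.I * ((κ : ℂ) * x) from by push_cast; ring]
  simp [Complex.add_re, Real.exp_add, ← Complex.ofReal_pow]
  ring

lemma intF {d κ s : ℝ} (hs : 0 < s) : Integrable (fun x : ℝ ↦ F d κ s x) := by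
  have : (-(s:ℂ)).re < 0 := by simpa using hs
  exact (integrable_cexp_quadratic' this (Complex.I * κ) (-((s:ℂ) * d^2))).const_mul _

lemma L1 {d κ : ℝ} (hd : 0 < d) :
    Integrable (Function.uncurry (F d κ)) ((volume.restrict (Ioi 0)).prod volume) := by
  have hcont : Continuous (Function.uncurry (F d κ)) := by
    unfold Function.uncurry F
    fun_prop
  rw [integrable_prod_iff hcont.aestronglyMeasurable]
  constructor
  · rw [ae_restrict_iff' measurableSet_Ioi]
    filter_upwards with s hs
    exact intF hs
  · have hint : Integrable (fun s : ℝ ↦ Real.sqrt π * Real.exp (-d^2 * s))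
        (volume.restrict (Ioi 0)) :=
      (exp_neg_integrableOn_Ioi 0 (by positivity : (0:ℝ) < d^2)).const_mul _
    apply hint.congr
    rw [Filter.EventuallyEq, ae_restrict_iff' measurableSet_Ioi]
    filter_upwards with s
    intro hs
    replace hs : (0:ℝ) < s := hs
    have : ∀ x : ℝ, ‖Function.uncurry (F d κ) (s, x)‖
        = (Real.sqrt s * Real.exp (-(s * d^2))) * Real.exp (-s * x^2) := fun x ↦ normF x
    simp_rw [this]
    rw [integral_const_mul, integral_gaussian]
    rw [show π / s = π * s⁻¹ from by ring, Real.sqrt_mul Real.pi_pos.le,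
      Real.sqrt_inv]
    have h0 : Real.sqrt s ≠ 0 := by positivity
    field_simp

lemma L3 {d κ : ℝ} (hd : 0 < d) {s : ℝ} (hs : 0 < s) :
    ∫ x : ℝ, F d κ s x
      = ((Real.sqrt π * Real.exp (-(s * d ^ 2 + κ ^ 2 / (4 * s))) : ℝ) : ℂ) := by
  unfold F
  rw [integral_const_mul]
  rw [integral_cexp_quadratic (by simpa using hs : (-(s:ℂ)).re < 0) (Complex.I * κ)
    (-((s:ℂ) * d^2))]
  have h1 : (↑π / -(-(s:ℂ))) = ((π / s : ℝ) : ℂ) := by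
    push_cast; rw [neg_neg]
  have h2 : ((π / s : ℝ) : ℂ) ^ (1/2 : ℂ) = ((Real.sqrt (π / s) : ℝ) : ℂ) := by
    rw [Real.sqrt_eq_rpow, Complex.ofReal_cpow (by positivity)]
    norm_num
  have h3 : -((s:ℂ) * d^2) - (Complex.I * κ)^2 / (4 * -(s:ℂ))
      = ((-(s * d ^ 2 + κ ^ 2 / (4 * s)) : ℝ) : ℂ) := by
    push_cast
    rw [mul_pow, Complex.I_sq]
    have : (s:ℂ) ≠ 0 := by exact_mod_cast hs.ne'
    field_simp
    ring
  rw [h1, h2, h3, ← Complex.ofReal_exp, ← Complex.ofReal_mul, ← Complex.ofReal_mul]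
  congr 1
  rw [← mul_assoc, ← Real.sqrt_mul hs.le, mul_div_cancel₀ _ hs.ne']

lemma L4 {d κ : ℝ} (hd : 0 < d) (x : ℝ) :
    ∫ s in Ioi (0:ℝ), F d κ s x
      = ((Real.Gamma (3/2) * (1 / (d ^ 2 + x ^ 2) ^ ((3:ℝ)/2)) : ℝ) : ℂ)
          * Complex.exp (Complex.I * κ * x) := by
  have hr : 0 < d ^ 2 + x ^ 2 := by positivity
  have hF : ∀ s ∈ Ioi (0:ℝ), F d κ s x
      = ((Real.sqrt s * Real.exp (-((d ^ 2 + x ^ 2) * s)) : ℝ) : ℂ)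
          * Complex.exp (Complex.I * κ * x) := by
    intro s _
    unfold F
    rw [show (-(s:ℂ) * x^2 + (Complex.I * κ) * x + -((s:ℂ) * d^2))
        = ((-((d ^ 2 + x ^ 2) * s) : ℝ) : ℂ) + Complex.I * κ * x from by push_cast; ring]
    rw [Complex.exp_add, ← Complex.ofReal_exp, Complex.ofReal_mul]
    ring
  rw [setIntegral_congr_fun measurableSet_Ioi hF, integral_mul_const]
  simp_rw [← Complex.coe_algebraMap, RCLike.algebraMap_eq_ofReal, integral_ofReal]
  congr 2
  have : ∀ s ∈ Ioi (0:ℝ), Real.sqrt s * Real.exp (-((d ^ 2 + x ^ 2) * s))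
      = s ^ ((3:ℝ)/2 - 1) * Real.exp (-((d ^ 2 + x ^ 2) * s)) := by
    intro s hs
    rw [Real.sqrt_eq_rpow]
    norm_num
  rw [setIntegral_congr_fun measurableSet_Ioi this,
    Real.integral_rpow_mul_exp_neg_mul_Ioi (by norm_num) hr]
  rw [one_div, one_div, Real.inv_rpow hr.le, mul_comm]

end FourierBesselAux

open FourierBesselAux in
/-- The Fourier transform, with convention `F[f](κ) = (1/√(2π)) ∫ f(x) e^{jκx} dx`,
of `f(x) = 1/(d² + x²)^{3/2}` equals `(1/d)·√(2/π)·|κ|·K₁(d|κ|)` for `κ ≠ 0`, `d > 0`,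
where `K₁` is the modified Bessel function of the second kind of order 1. -/
theorem fourier_one_div_sq_add_sq_three_halves (d κ : ℝ) (hd : 0 < d) (hκ : κ ≠ 0) :
    (1 / (Real.sqrt (2 * Real.pi)) : ℂ) *
        ∫ x : ℝ, ((1 / (d ^ 2 + x ^ 2) ^ ((3 : ℝ) / 2) : ℝ) : ℂ) *
          Complex.exp (Complex.I * κ * x)
      = (((1 / d) * Real.sqrt (2 / Real.pi) * |κ| * besselK 1 (d * |κ|) : ℝ) : ℂ) := by
  have habs : 0 < |κ| := abs_pos.mpr hκ
  have hG : 0 < Real.Gamma (3/2) := Real.Gamma_pos_of_pos (by norm_num)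
  have h0 : ∀ x : ℝ,
      ((1 / (d ^ 2 + x ^ 2) ^ ((3 : ℝ) / 2) : ℝ) : ℂ) * Complex.exp (Complex.I * κ * x)
      = (((Real.Gamma (3/2))⁻¹ : ℝ) : ℂ) * ∫ s in Ioi (0:ℝ), F d κ s x := by
    intro x
    rw [L4 hd x, ← mul_assoc, ← Complex.ofReal_mul]
    congr 2
    field_simp
  rw [integral_congr_ae (Filter.Eventually.of_forall h0), integral_const_mul,
    ← integral_integral_swap (L1 hd),
    setIntegral_congr_fun measurableSet_Ioi (fun s hs ↦ L3 hd hs)]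
  simp_rw [Complex.ofReal_mul]
  rw [integral_const_mul]
  simp_rw [← Complex.coe_algebraMap, RCLike.algebraMap_eq_ofReal, integral_ofReal]
  rw [show (∫ s in Ioi (0:ℝ), Real.exp (-(s * d ^ 2 + κ ^ 2 / (4 * s))))
      = (|κ| / d) * besselK 1 (d * |κ|) from J_eq hd hκ]
  have hGamma : Real.Gamma (3/2) = Real.sqrt π / 2 := by
    rw [show (3/2 : ℝ) = 1/2 + 1 from by norm_num,
      Real.Gamma_add_one (by norm_num : (1/2:ℝ) ≠ 0), Real.Gamma_one_half_eq]
    ring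
  rw [hGamma]
  have hsp : 0 < Real.sqrt π := Real.sqrt_pos.mpr Real.pi_pos
  have hs2 : Real.sqrt (2 * π) = Real.sqrt 2 * Real.sqrt π :=
    Real.sqrt_mul (by norm_num) π
  have hsd : Real.sqrt (2 / π) = Real.sqrt 2 / Real.sqrt π :=
    Real.sqrt_div (by norm_num) π
  have h2 : Real.sqrt 2 * Real.sqrt 2 = 2 := Real.mul_self_sqrt (by norm_num)
  have key : 1 / Real.sqrt (2 * Real.pi) * ((Real.sqrt π / 2)⁻¹ * Real.sqrt π)
      = Real.sqrt (2 / Real.pi) := by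
    rw [hs2, hsd]
    field_simp
    linear_combination (-1 : ℝ) * h2
  calc (1 / ((Real.sqrt (2 * Real.pi) : ℝ) : ℂ))
        * (((((Real.sqrt π / 2)⁻¹ : ℝ)) : ℂ) * ((((Real.sqrt π : ℝ)) : ℂ)
          * (((|κ| / d * besselK 1 (d * |κ|) : ℝ)) : ℂ)))
      = (((1 / Real.sqrt (2 * Real.pi) * ((Real.sqrt π / 2)⁻¹ * Real.sqrt π)
          * (|κ| / d * besselK 1 (d * |κ|)) : ℝ)) : ℂ) := by push_cast; ring
    _ = (((1 / d : ℝ)) : ℂ) * (((Real.sqrt (2 / Real.pi) : ℝ)) : ℂ) * (((|κ| : ℝ)) : ℂ)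
          * (((besselK 1 (d * |κ|) : ℝ)) : ℂ) := by
        rw [key]
        push_cast
        ring
end

section
/- Let K_E and K_N be n×n positive semidefinite Hermitian matrices with K_N positive definite. Diagonalize K_N = Q Λ Q^H with Q unitary and Λ diagonal with entries Λ_ii > 0. Then among all positive semidefinite K_E with trace(K_E) ≤ nP₀, the determinant det(K_E + K_N) is maximized by K_E = Q A Q^H where A is diagonal with A_ii = max(v − Λ_ii, 0) and v chosen so that Σ_i max(v − Λ_ii, 0) = nP₀. -/
open Matrix
open scoped ComplexOrder

private lemma amgm_aux {k : ℕ} (lam : Fin k → ℝ) (hnn : ∀ i, 0 ≤ lam i)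
    (hs : ∑ i, lam i ≤ k) : ∏ i, lam i ≤ 1 := by
  rcases Nat.eq_zero_or_pos k with hk | hk
  · subst hk; simp
  have hk' : (0:ℝ) < k := by exact_mod_cast hk
  have hw' : ∑ _i : Fin k, (k:ℝ)⁻¹ = 1 := by
    simp [Finset.sum_const]
    field_simp
  have h1 := Real.geom_mean_le_arith_mean_weighted Finset.univ (fun _ => (k:ℝ)⁻¹) lam
      (fun i _ => by positivity) hw' (fun i _ => hnn i)
  have h2 : ∑ i : Fin k, (k:ℝ)⁻¹ * lam i ≤ 1 := by
    rw [← Finset.mul_sum]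
    rw [inv_mul_le_iff₀ hk', mul_one]
    exact hs
  have h3 : ∏ i, lam i = (∏ i, lam i ^ ((k:ℝ)⁻¹)) ^ (k:ℕ) := by
    rw [← Finset.prod_pow]
    refine Finset.prod_congr rfl fun i _ => ?_
    rw [← Real.rpow_natCast (lam i ^ ((k:ℝ)⁻¹)) k, ← Real.rpow_mul (hnn i),
      inv_mul_cancel₀ (ne_of_gt hk'), Real.rpow_one]
  rw [h3]
  exact pow_le_one₀ (Finset.prod_nonneg fun i _ => Real.rpow_nonneg (hnn i) _) (h1.trans h2)

private lemma det_re_le_one {k : ℕ} {M : Matrix (Fin k) (Fin k) ℂ} (hM : M.PosSemidef)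
    (htr : M.trace.re ≤ k) : M.det.re ≤ 1 := by
  have hH := hM.isHermitian
  have hdet : M.det = ((∏ i, hH.eigenvalues i : ℝ) : ℂ) := by
    rw [hH.det_eq_prod_eigenvalues]; push_cast; rfl
  have htr' : M.trace = ((∑ i, hH.eigenvalues i : ℝ) : ℂ) := by
    conv_lhs => rw [hH.spectral_theorem]
    rw [Unitary.conjStarAlgAut_apply]
    rw [trace_mul_cycle, (Matrix.mem_unitaryGroup_iff').mp (hH.eigenvectorUnitary).2, one_mul,
      trace_diagonal]
    push_cast; rfl
  rw [hdet, Complex.ofReal_re]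
  apply amgm_aux _ (fun i => hM.eigenvalues_nonneg i)
  rw [htr', Complex.ofReal_re] at htr
  exact htr

private lemma diag_re_nonneg {k : ℕ} {B : Matrix (Fin k) (Fin k) ℂ} (hB : B.PosSemidef)
    (i : Fin k) : 0 ≤ (B i i).re := by
  have h := hB.re_dotProduct_nonneg (Pi.single i 1)
  simpa [Matrix.mulVec_single, dotProduct, Pi.single_apply, apply_ite] using h

/-- Matrix water-filling: let `K_N = Q Λ Qᴴ` be positive definite Hermitian with `Q`
unitary and `Λ` diagonal with positive entries. Among all positive semidefinite `K_E`
with `trace(K_E) ≤ n·P₀`, the determinant `det(K_E + K_N)` is maximized by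
`K_E = Q A Qᴴ` where `A` is diagonal with `A_ii = max(v − Λ_ii, 0)` and `v` is chosen
so that `Σ_i max(v − Λ_ii, 0) = n·P₀`. -/
theorem matrix_waterfilling {n : ℕ} (P₀ : ℝ) (hP₀ : 0 < P₀)
    (KN : Matrix (Fin n) (Fin n) ℂ) (hKN : KN.PosDef)
    (Q : Matrix (Fin n) (Fin n) ℂ) (hQ : Q ∈ Matrix.unitaryGroup (Fin n) ℂ)
    (Λ : Fin n → ℝ) (hΛpos : ∀ i, 0 < Λ i)
    (hdiag : KN = Q * Matrix.diagonal (fun i => ((Λ i : ℝ) : ℂ)) * Qᴴ)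
    (v : ℝ) (hv : ∑ i, max (v - Λ i) 0 = n * P₀)
    (KEopt : Matrix (Fin n) (Fin n) ℂ)
    (hKEopt : KEopt = Q * Matrix.diagonal (fun i => ((max (v - Λ i) 0 : ℝ) : ℂ)) * Qᴴ) :
    ∀ KE : Matrix (Fin n) (Fin n) ℂ, KE.PosSemidef → KE.trace.re ≤ n * P₀ →
      (KE + KN).det.re ≤ (KEopt + KN).det.re := by
  intro KE hKE htr
  rcases Nat.eq_zero_or_pos n with hn | hn
  · subst hn
    simp [Matrix.det_fin_zero]
  -- basic unitary facts
  have hQ1 : Q * Qᴴ = 1 := by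
    rw [← Matrix.star_eq_conjTranspose]
    exact (Matrix.mem_unitaryGroup_iff).mp hQ
  have hQ1' : Qᴴ * Q = 1 := by
    rw [← Matrix.star_eq_conjTranspose]
    exact (Matrix.mem_unitaryGroup_iff').mp hQ
  have hdetQ : ∀ D : Matrix (Fin n) (Fin n) ℂ, (Q * D * Qᴴ).det = D.det := by
    intro D
    calc (Q * D * Qᴴ).det = Q.det * D.det * Qᴴ.det := by rw [det_mul, det_mul]
      _ = D.det * (Q * Qᴴ).det := by rw [det_mul]; ring
      _ = D.det := by rw [hQ1, det_one, mul_one]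
  -- the scalar data
  set c : Fin n → ℝ := fun i => max v (Λ i) with hcdef
  have hc : ∀ i, 0 < c i := fun i => lt_of_lt_of_le (hΛpos i) (le_max_right _ _)
  have hceq : ∀ i, max (v - Λ i) 0 + Λ i = c i := by
    intro i
    show max (v - Λ i) 0 + Λ i = max v (Λ i)
    rcases le_total v (Λ i) with h | h
    · rw [max_eq_right (sub_nonpos.mpr h), max_eq_right h, zero_add]
    · rw [max_eq_left (sub_nonneg.mpr h), max_eq_left h]; ring
  have hvpos : 0 < v := by
    by_contra hv0
    push_neg at hv0
    have h0 : ∀ i, max (v - Λ i) 0 = 0 := fun i =>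
      max_eq_right (by linarith [hΛpos i])
    have : (0:ℝ) < (n:ℝ) * P₀ := mul_pos (by exact_mod_cast hn) hP₀
    rw [← hv] at this
    simp [h0] at this
  -- RHS value
  have hRHS : (KEopt + KN).det = ((∏ i, c i : ℝ) : ℂ) := by
    have he : KEopt + KN
        = Q * (Matrix.diagonal (fun i => ((max (v - Λ i) 0 : ℝ) : ℂ))
            + Matrix.diagonal (fun i => ((Λ i : ℝ) : ℂ))) * Qᴴ := by
      rw [hKEopt, hdiag, Matrix.mul_add, Matrix.add_mul]
    rw [he, hdetQ, Matrix.diagonal_add, Matrix.det_diagonal]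
    rw [Complex.ofReal_prod]
    refine Finset.prod_congr rfl fun i _ => ?_
    rw [← Complex.ofReal_add, hceq i]
  -- conjugated matrix
  set B : Matrix (Fin n) (Fin n) ℂ := Qᴴ * KE * Q with hB
  have hBpsd : B.PosSemidef := hKE.conjTranspose_mul_mul_same Q
  have hKEeq : KE = Q * B * Qᴴ := by
    rw [hB]
    have h2 : Q * (Qᴴ * KE * Q) * Qᴴ = (Q * Qᴴ) * KE * (Q * Qᴴ) := by
      noncomm_ring
    rw [h2, hQ1, one_mul, mul_one]
  set M : Matrix (Fin n) (Fin n) ℂ := B + Matrix.diagonal (fun i => ((Λ i : ℝ) : ℂ)) with hM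
  have hMeq : KE + KN = Q * M * Qᴴ := by
    rw [hM, hKEeq, hdiag, Matrix.mul_add, Matrix.add_mul]
  have hMpsd : M.PosSemidef := by
    refine hBpsd.add (Matrix.posSemidef_diagonal_iff.mpr fun i => ?_)
    exact_mod_cast (hΛpos i).le
  set x : Fin n → ℝ := fun i => (B i i).re with hx
  have hxnn : ∀ i, 0 ≤ x i := fun i => diag_re_nonneg hBpsd i
  have hsx : ∑ i, x i ≤ n * P₀ := by
    have htrB : B.trace = KE.trace := by
      rw [hB, Matrix.trace_mul_cycle, hQ1, one_mul]
    have h1 : (∑ i, x i) = B.trace.re := by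
      rw [Matrix.trace, Complex.re_sum]
      rfl
    rw [h1, htrB]; exact htr
  -- key scalar inequality
  have hkey : ∑ i, (x i + Λ i) / c i ≤ (n : ℝ) := by
    have hterm : ∀ i, (x i + Λ i) / c i ≤ (x i - max (v - Λ i) 0) / v + 1 := by
      intro i
      rcases le_total v (Λ i) with h | h
      · rw [max_eq_right (sub_nonpos.mpr h), sub_zero]
        have hc' : c i = Λ i := max_eq_right h
        rw [hc']
        have h1 : (x i + Λ i) / Λ i = x i / Λ i + 1 := by
          rw [add_div, div_self (hΛpos i).ne']
        rw [h1]
        have h2 : x i / Λ i ≤ x i / v :=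
          div_le_div_of_nonneg_left (hxnn i) hvpos h
        linarith
      · rw [max_eq_left (sub_nonneg.mpr h)]
        have hc' : c i = v := max_eq_left h
        rw [hc']
        have h1 : (x i - (v - Λ i)) / v + 1 = (x i + Λ i) / v := by
          field_simp
          ring
        rw [h1]
    calc ∑ i, (x i + Λ i) / c i
        ≤ ∑ i, ((x i - max (v - Λ i) 0) / v + 1) :=
          Finset.sum_le_sum fun i _ => hterm i
      _ = (∑ i, x i - ∑ i, max (v - Λ i) 0) / v + n := by
          rw [Finset.sum_add_distrib, ← Finset.sum_div, Finset.sum_sub_distrib]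
          simp
      _ ≤ (n : ℝ) := by
          rw [hv]
          have h3 : (∑ i, x i - (n : ℝ) * P₀) / v ≤ 0 :=
            div_nonpos_of_nonpos_of_nonneg (by linarith) hvpos.le
          linarith
  -- scaling
  set g : Fin n → ℝ := fun i => (Real.sqrt (c i))⁻¹ with hg
  have hg2 : ∀ i, g i ^ 2 = (c i)⁻¹ := by
    intro i
    show (Real.sqrt (c i))⁻¹ ^ 2 = (c i)⁻¹
    rw [inv_pow, Real.sq_sqrt (hc i).le]
  set G : Matrix (Fin n) (Fin n) ℂ := Matrix.diagonal (fun i => ((g i : ℝ) : ℂ)) with hG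
  have hGH : Gᴴ = G := by
    have hstar : (star fun i : Fin n => ((g i : ℝ) : ℂ)) = fun i => ((g i : ℝ) : ℂ) := by
      funext i
      simp [Complex.conj_ofReal]
    rw [hG, Matrix.diagonal_conjTranspose, hstar]
  set N : Matrix (Fin n) (Fin n) ℂ := G * M * G with hN
  have hNpsd : N.PosSemidef := by
    have h := hMpsd.conjTranspose_mul_mul_same G
    rwa [hGH] at h
  have hNdiag : ∀ i, N i i = (((g i) ^ 2 : ℝ) : ℂ) * M i i := by
    intro i
    rw [hN, hG, Matrix.mul_diagonal, Matrix.diagonal_mul]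
    push_cast
    ring
  have hMdiag : ∀ i, (M i i).re = x i + Λ i := by
    intro i
    rw [hM, Matrix.add_apply, Matrix.diagonal_apply_eq]
    rw [Complex.add_re, Complex.ofReal_re]
  have htrN : N.trace.re ≤ (n : ℝ) := by
    have h1 : N.trace.re = ∑ i, (x i + Λ i) / c i := by
      rw [Matrix.trace, Complex.re_sum]
      refine Finset.sum_congr rfl fun i _ => ?_
      rw [Matrix.diag_apply, hNdiag i, Complex.re_ofReal_mul, hMdiag i, hg2 i]
      rw [div_eq_inv_mul]
    rw [h1]
    simpa using hkey
  have hdetN : N.det.re ≤ 1 := det_re_le_one hNpsd (by simpa using htrN)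
  have hp : (∏ i, g i) ^ 2 = ∏ i, (c i)⁻¹ := by
    rw [← Finset.prod_pow]
    exact Finset.prod_congr rfl fun i _ => hg2 i
  have hdetNM : N.det = (((∏ i, (c i)⁻¹ : ℝ)) : ℂ) * M.det := by
    calc N.det = G.det * M.det * G.det := by rw [hN, det_mul, det_mul]
      _ = ((∏ i, g i : ℝ) : ℂ) * M.det * ((∏ i, g i : ℝ) : ℂ) := by
          rw [hG, Matrix.det_diagonal, Complex.ofReal_prod]
      _ = ((((∏ i, g i) ^ 2 : ℝ)) : ℂ) * M.det := by push_cast; ring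
      _ = (((∏ i, (c i)⁻¹ : ℝ)) : ℂ) * M.det := by rw [hp]
  have h1 : N.det.re = (∏ i, (c i)⁻¹) * M.det.re := by
    rw [hdetNM, Complex.re_ofReal_mul]
  have hprodc : 0 < ∏ i, c i := Finset.prod_pos fun i _ => hc i
  have hcc : (∏ i, c i) * (∏ i, (c i)⁻¹) = 1 := by
    rw [← Finset.prod_mul_distrib]
    exact Finset.prod_eq_one fun i _ => mul_inv_cancel₀ (hc i).ne'
  have hfinal : M.det.re ≤ ∏ i, c i := by
    calc M.det.re = ((∏ i, c i) * (∏ i, (c i)⁻¹)) * M.det.re := by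
          rw [hcc, one_mul]
      _ = (∏ i, c i) * ((∏ i, (c i)⁻¹) * M.det.re) := by ring
      _ = (∏ i, c i) * N.det.re := by rw [h1]
      _ ≤ (∏ i, c i) * 1 := mul_le_mul_of_nonneg_left hdetN hprodc.le
      _ = ∏ i, c i := mul_one _
  have hL : (KE + KN).det.re = M.det.re := by rw [hMeq, hdetQ]
  have hR : (KEopt + KN).det.re = ∏ i, c i := by rw [hRHS, Complex.ofReal_re]
  rw [hL, hR]
  exact hfinal
end

section
/- Let R_E(r, r') = P·e^{-α|r−r'|} on [0, L] with P, α > 0. Then for each positive ω_k satisfying the transcendental equation 2·arctan(ω_k/α) = kπ − ω_k·L (k ∈ ℕ), the function φ_k(r) = ω_k·cos(ω_k r) + α·sin(ω_k r) satisfies the integral eigenvalue equation ∫₀^L R_E(r, r')·φ_k(r) dr = λ_k·φ_k(r') for all r' ∈ [0, L], with eigenvalue λ_k = 2αP/(α² + ω_k²). -/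
open Real intervalIntegral

/-- Mercer eigenpair verification for the exponential (Ornstein–Uhlenbeck) kernel
`R_E(r, r') = P·e^{-α|r−r'|}` on `[0, L]`: for each positive `ω_k` solving
`2·arctan(ω_k/α) = kπ − ω_k·L`, the function
`φ_k(r) = ω_k·cos(ω_k r) + α·sin(ω_k r)` satisfies
`∫₀^L R_E(r, r')·φ_k(r) dr = λ_k·φ_k(r')` with `λ_k = 2αP/(α² + ω_k²)`. -/
theorem mercer_eigenpair_exponential_kernel (P α L : ℝ) (hP : 0 < P) (hα : 0 < α)
    (hL : 0 < L) (k : ℕ) (ω : ℝ) (hω : 0 < ω)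
    (heq : 2 * Real.arctan (ω / α) = k * Real.pi - ω * L)
    (φ : ℝ → ℝ) (hφ : φ = fun r => ω * Real.cos (ω * r) + α * Real.sin (ω * r)) :
    ∀ r' ∈ Set.Icc (0 : ℝ) L,
      ∫ r in (0 : ℝ)..L, P * Real.exp (-(α * |r - r'|)) * φ r
        = (2 * α * P / (α ^ 2 + ω ^ 2)) * φ r' := by
  subst hφ
  intro r' hr'
  obtain ⟨hr'0, hr'L⟩ := hr'
  have hαne : α ≠ 0 := ne_of_gt hα
  have hs0 : (α ^ 2 + ω ^ 2) ≠ 0 := by positivity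
  set A : ℝ := -2 * α * ω / (α ^ 2 + ω ^ 2) with hA
  set B : ℝ := (ω ^ 2 - α ^ 2) / (α ^ 2 + ω ^ 2) with hB
  -- boundary identity
  have hbound : A * Real.cos (ω * L) + B * Real.sin (ω * L) = 0 := by
    have hωL : ω * L = (k : ℝ) * Real.pi - 2 * Real.arctan (ω / α) := by linarith
    have hq : Real.sqrt (1 + (ω / α) ^ 2) ^ 2 = 1 + (ω / α) ^ 2 :=
      Real.sq_sqrt (by positivity)
    have hqpos : 0 < Real.sqrt (1 + (ω / α) ^ 2) := Real.sqrt_pos.2 (by positivity)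
    have hqne := ne_of_gt hqpos
    rw [hωL, Real.cos_sub, Real.sin_sub, Real.sin_nat_mul_pi,
      show (2 : ℝ) * Real.arctan (ω / α) = 2 * Real.arctan (ω / α) from rfl]
    rw [Real.cos_two_mul, Real.sin_two_mul, Real.sin_arctan, Real.cos_arctan]
    rw [hA, hB]
    field_simp
    ring_nf
    rw [Real.sq_sqrt (by positivity)]
    field_simp
    ring
  -- integrability of the kernel integrand
  have hcont : Continuous fun r : ℝ =>
      P * Real.exp (-(α * |r - r'|)) * (ω * Real.cos (ω * r) + α * Real.sin (ω * r)) := by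
    fun_prop
  have hint : ∀ a b : ℝ, IntervalIntegrable
      (fun r => P * Real.exp (-(α * |r - r'|)) * (ω * Real.cos (ω * r) + α * Real.sin (ω * r)))
      MeasureTheory.volume a b := fun a b => hcont.intervalIntegrable a b
  rw [← intervalIntegral.integral_add_adjacent_intervals (hint 0 r') (hint r' L)]
  -- first piece
  have h1 : (∫ r in (0 : ℝ)..r',
      P * Real.exp (-(α * |r - r'|)) * (ω * Real.cos (ω * r) + α * Real.sin (ω * r)))
      = P * Real.sin (ω * r') := by
    have e1 : (∫ r in (0 : ℝ)..r',
        P * Real.exp (-(α * |r - r'|)) * (ω * Real.cos (ω * r) + α * Real.sin (ω * r)))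
        = ∫ r in (0 : ℝ)..r',
          P * (Real.exp (α * r - α * r') * (ω * Real.cos (ω * r) + α * Real.sin (ω * r))) := by
      apply intervalIntegral.integral_congr
      intro r hr
      rw [Set.uIcc_of_le hr'0] at hr
      have habs : |r - r'| = r' - r := by
        rw [abs_sub_comm]; exact abs_of_nonneg (by linarith [hr.2])
      simp only [habs]
      rw [show -(α * (r' - r)) = α * r - α * r' from by ring]
      ring
    rw [e1]
    have key : ∀ r ∈ Set.uIcc (0 : ℝ) r',
        HasDerivAt (fun t => P * (Real.exp (α * t - α * r') * Real.sin (ω * t)))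
          (P * (Real.exp (α * r - α * r') * (ω * Real.cos (ω * r) + α * Real.sin (ω * r)))) r := by
      intro r _
      have hlin : HasDerivAt (fun t : ℝ => α * t - α * r') α r := by
        simpa using ((hasDerivAt_id r).const_mul α).sub_const (α * r')
      have hexp := hlin.exp
      have hωt : HasDerivAt (fun t : ℝ => ω * t) ω r := by
        simpa using (hasDerivAt_id r).const_mul ω
      have hsin := hωt.sin
      have := (hexp.mul hsin).const_mul P
      refine this.congr_deriv ?_
      ring
    have hintc : IntervalIntegrable
        (fun r => P * (Real.exp (α * r - α * r') * (ω * Real.cos (ω * r) + α * Real.sin (ω * r))))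
        MeasureTheory.volume 0 r' := by
      apply Continuous.intervalIntegrable; fun_prop
    rw [intervalIntegral.integral_eq_sub_of_hasDerivAt key hintc]
    simp
  -- second piece
  have h2 : (∫ r in r'..L,
      P * Real.exp (-(α * |r - r'|)) * (ω * Real.cos (ω * r) + α * Real.sin (ω * r)))
      = P * Real.exp (α * r' - α * L) * (A * Real.cos (ω * L) + B * Real.sin (ω * L))
        - P * (A * Real.cos (ω * r') + B * Real.sin (ω * r')) := by
    have e2 : (∫ r in r'..L,
        P * Real.exp (-(α * |r - r'|)) * (ω * Real.cos (ω * r) + α * Real.sin (ω * r)))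
        = ∫ r in r'..L,
          P * (Real.exp (α * r' - α * r) * (ω * Real.cos (ω * r) + α * Real.sin (ω * r))) := by
      apply intervalIntegral.integral_congr
      intro r hr
      rw [Set.uIcc_of_le hr'L] at hr
      have habs : |r - r'| = r - r' := abs_of_nonneg (by linarith [hr.1])
      simp only [habs]
      rw [show -(α * (r - r')) = α * r' - α * r from by ring]
      ring
    rw [e2]
    have hc1 : B * ω - α * A = ω := by rw [hA, hB]; field_simp; ring
    have hc2 : -(α * B) - A * ω = α := by rw [hA, hB]; field_simp; ring
    have key : ∀ r ∈ Set.uIcc r' L,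
        HasDerivAt (fun t => P * (Real.exp (α * r' - α * t) *
            (A * Real.cos (ω * t) + B * Real.sin (ω * t))))
          (P * (Real.exp (α * r' - α * r) * (ω * Real.cos (ω * r) + α * Real.sin (ω * r)))) r := by
      intro r _
      have hlin : HasDerivAt (fun t : ℝ => α * r' - α * t) (-α) r := by
        simpa using ((hasDerivAt_id r).const_mul α).const_sub (α * r')
      have hexp := hlin.exp
      have hωt : HasDerivAt (fun t : ℝ => ω * t) ω r := by
        simpa using (hasDerivAt_id r).const_mul ω
      have htrig := (hωt.cos.const_mul A).add (hωt.sin.const_mul B)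
      have := (hexp.mul htrig).const_mul P
      refine this.congr_deriv ?_
      have expand : Real.exp (α * r' - α * r) * (ω * Real.cos (ω * r) + α * Real.sin (ω * r))
          = Real.exp (α * r' - α * r) *
              ((B * ω - α * A) * Real.cos (ω * r) + (-(α * B) - A * ω) * Real.sin (ω * r)) := by
        rw [hc1, hc2]
      rw [expand]
      simp only [Pi.add_apply]
      ring
    have hintc : IntervalIntegrable
        (fun r => P * (Real.exp (α * r' - α * r) * (ω * Real.cos (ω * r) + α * Real.sin (ω * r))))
        MeasureTheory.volume r' L := by
      apply Continuous.intervalIntegrable; fun_prop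
    rw [intervalIntegral.integral_eq_sub_of_hasDerivAt key hintc]
    rw [show α * r' - α * r' = (0:ℝ) by ring, Real.exp_zero]
    ring
  rw [h1, h2, hbound]
  rw [hA, hB]
  field_simp
  ring
end
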